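/- A density matrix ρ on C^d is coherent (i.e. has a nonzero off-diagonal entry in the fixed basis) if and only if there exists a Hermitian matrix W whose diagonal entries all lie in [m, M] with min_i W_ii = m and max_i W_ii = M, such that Tr(Wρ) < m or Tr(Wρ) > M. -/

import Mathlib

/-!
For a density matrix `ρ`, `Re Tr(Wρ) = ∑ᵢ Re Wᵢᵢ · ρᵢᵢ` whenever `ρ` is diagonal, a convex
combination of the diagonal entries of `W`, hence in `[m, M]`. Conversely, if `ρₖₗ ≠ 0` with
`k ≠ l`, take `W = diag(m, …, M, …, m) + t (E + Eᴴ)` with `E = ρₖₗ |k⟩⟨l|`: the off-diagonal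
part leaves the diagonal of `W` alone and adds `2t|ρₖₗ|²` to `Re Tr(Wρ)`, which for large `t`
pushes it above `M`.
-/

open Matrix ComplexOrder

namespace Matrix

variable {n : Type*} [Fintype n]

lemma PosSemidef.re_sum_mul_diag_mem_Icc {ρ : Matrix n n ℂ} (hρ : ρ.PosSemidef)
    (htr : ρ.trace = 1) {w : n → ℂ} {m M : ℝ} (hw : ∀ i, (w i).re ∈ Set.Icc m M) :
    (∑ i, w i * ρ i i).re ∈ Set.Icc m M := by
  have hdiag (i : n) := Complex.nonneg_iff.mp (hρ.diag_nonneg (i := i))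
  have hre (i : n) : (w i * ρ i i).re = (ρ i i).re • (w i).re := by
    simp [Complex.mul_re, ← (hdiag i).2, mul_comm]
  have hsum : ∑ i, (ρ i i).re = 1 := by
    simpa [trace, Complex.re_sum] using congrArg Complex.re htr
  rw [Complex.re_sum]
  simp_rw [hre]
  exact (convex_Icc m M).sum_mem (fun i _ => (hdiag i).1) hsum (fun i _ => hw i)

variable [DecidableEq n]

lemma IsDiag.trace_mul {R : Type*} [Semiring R] {ρ : Matrix n n R} (hρ : ρ.IsDiag)
    (W : Matrix n n R) :
    trace (W * ρ) = ∑ i, W i i * ρ i i := by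
  conv_lhs => rw [← (isDiag_iff_diagonal_diag ρ).mp hρ]
  simp [trace, mul_diagonal]

lemma trace_diagonal_mul {R : Type*} [CommSemiring R] (v : n → R) (A : Matrix n n R) :
    trace (diagonal v * A) = ∑ i, v i * A i i := by
  simp [trace, diagonal_mul]

lemma re_trace_single_add_conjTranspose_mul {ρ : Matrix n n ℂ} (hρ : ρ.IsHermitian) (k l : n) :
    (trace ((single k l (ρ k l) + (single k l (ρ k l))ᴴ) * ρ)).re =
      2 * Complex.normSq (ρ k l) := by
  rw [add_mul, trace_add, conjTranspose_single, trace_single_mul, trace_single_mul,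
    ← hρ.apply l k, smul_eq_mul, smul_eq_mul, Complex.star_def, Complex.mul_conj, mul_comm,
    Complex.mul_conj]
  simp [two_mul]

lemma PosSemidef.exists_witness_of_apply_ne_zero {ρ : Matrix n n ℂ} (hρ : ρ.PosSemidef)
    (htr : ρ.trace = 1) {m M : ℝ} (hmM : m ≤ M) {k l : n} (hkl : k ≠ l) (hne : ρ k l ≠ 0) :
    ∃ W : Matrix n n ℂ, W.IsHermitian ∧
      (∀ i, m ≤ (W i i).re) ∧ (∃ i, (W i i).re = m) ∧
      (∀ i, (W i i).re ≤ M) ∧ (∃ i, (W i i).re = M) ∧ M < (trace (W * ρ)).re := by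
  set A := single k l (ρ k l)
  set v : n → ℝ := fun i => if i = l then M else m
  set t : ℝ := (M - m + 1) / Complex.normSq (ρ k l)
  set W := diagonal (fun i => (v i : ℂ)) + t • (A + Aᴴ)
  have hv : ∀ i, v i ∈ Set.Icc m M := fun i => by
    by_cases h : i = l <;> simp [v, h, hmM]
  have hW (i : n) : W i i = v i := by
    have hA : A i i = 0 := single_apply_of_ne _ _ _ _ _ fun h => hkl (h.1.trans h.2.symm)
    simp [W, hA]
  have hWρ : M < (trace (W * ρ)).re := by
    have hlow := (hρ.re_sum_mul_diag_mem_Icc htr (w := fun i => (v i : ℂ)) (by simpa using hv)).1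
    have hX : t * Complex.normSq (ρ k l) = M - m + 1 :=
      div_mul_cancel₀ _ (Complex.normSq_pos.mpr hne).ne'
    rw [add_mul, trace_add, smul_mul_assoc, trace_smul, Complex.add_re, Complex.smul_re,
      re_trace_single_add_conjTranspose_mul hρ.isHermitian, trace_diagonal_mul, smul_eq_mul]
    linarith
  refine ⟨W, ?_, fun i => ?_, ⟨k, ?_⟩, fun i => ?_, ⟨l, ?_⟩, hWρ⟩
  · exact (isHermitian_diagonal_of_self_adjoint _ (by ext; simp)).add
      ((isHermitian_add_transpose_self A).smul (IsSelfAdjoint.all t))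
  · simpa [hW] using (hv i).1
  · simp [hW, v, hkl]
  · simpa [hW] using (hv i).2
  · simp [hW, v]

end Matrix

/-- A density matrix `ρ` is coherent (has a nonzero off-diagonal entry) iff
there is a Hermitian matrix `W` with all diagonal entries in `[m, M]`, minimum `m` and
maximum `M`, such that `Tr(Wρ) < m` or `Tr(Wρ) > M`. -/
theorem stmt_3 {d : ℕ} (m M : ℝ) (hmM : m ≤ M)
    (ρ : Matrix (Fin d) (Fin d) ℂ) (hρ : ρ.PosSemidef) (htr : ρ.trace = 1) :
    (∃ k l, k ≠ l ∧ ρ k l ≠ 0) ↔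
      ∃ W : Matrix (Fin d) (Fin d) ℂ,
        W.IsHermitian ∧
        (∀ i, m ≤ (W i i).re) ∧ (∃ i, (W i i).re = m) ∧
        (∀ i, (W i i).re ≤ M) ∧ (∃ i, (W i i).re = M) ∧
        ((Matrix.trace (W * ρ)).re < m ∨ M < (Matrix.trace (W * ρ)).re) := by
  constructor
  · rintro ⟨k, l, hkl, hne⟩
    obtain ⟨W, hW, hm, hmin, hM, hmax, hgt⟩ := hρ.exists_witness_of_apply_ne_zero htr hmM hkl hne
    exact ⟨W, hW, hm, hmin, hM, hmax, Or.inr hgt⟩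
  · rintro ⟨W, -, hm, -, hM, -, hout⟩
    by_contra hincoherent
    have hdiag : ρ.IsDiag := fun k l hkl => by
      by_contra hne
      exact hincoherent ⟨k, l, hkl, hne⟩
    have hmem := hρ.re_sum_mul_diag_mem_Icc htr (fun i => ⟨hm i, hM i⟩)
    rw [← hdiag.trace_mul] at hmem
    rcases hout with h | h <;> linarith [hmem.1, hmem.2]
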